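/- If M is a symmetric positive definite real n×n matrix and A is a symmetric real n×n matrix, then there exists an invertible matrix S and a diagonal matrix Λ such that A S = M S Λ and S^T M S = I (solvability of the generalized eigenvalue problem by M-orthonormal eigenvectors). -/

import Mathlib

/-!
Write `M = Rᴴ * R` with `R = √M` invertible. Then `B = R⁻¹ᴴ * A * R⁻¹` is Hermitian, so the
spectral theorem gives a unitary `U` with `B * U = U * D`. The matrix `S = R⁻¹ * U` satisfies
`Sᴴ * M * S = Uᴴ * U = 1` and `A * S = Rᴴ * B * U = Rᴴ * U * D = M * S * D`.
-/

open Matrix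

namespace Matrix

open scoped ComplexOrder

variable {ι 𝕜 : Type*} [Fintype ι] [DecidableEq ι] [RCLike 𝕜]

theorem IsHermitian.mul_eigenvectorUnitary {B : Matrix ι ι 𝕜} (hB : B.IsHermitian) :
    B * (hB.eigenvectorUnitary : Matrix ι ι 𝕜) =
      (hB.eigenvectorUnitary : Matrix ι ι 𝕜) * diagonal (RCLike.ofReal ∘ hB.eigenvalues) := by
  have hdiag := hB.conjStarAlgAut_star_eigenvectorUnitary
  rw [Unitary.conjStarAlgAut_star_apply] at hdiag
  rw [← hdiag, ← mul_assoc, ← mul_assoc, Unitary.mul_star_self_of_mem hB.eigenvectorUnitary.2,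
    one_mul]

open scoped MatrixOrder in
theorem PosDef.exists_isUnit_conjTranspose_mul_self {M : Matrix ι ι 𝕜} (hM : M.PosDef) :
    ∃ R : Matrix ι ι 𝕜, IsUnit R ∧ Rᴴ * R = M := by
  have hsq : CFC.sqrt M * CFC.sqrt M = M := CFC.sqrt_mul_sqrt_self M hM.posSemidef.nonneg
  refine ⟨CFC.sqrt M, isUnit_of_mul_isUnit_left (hsq.symm ▸ hM.isUnit), ?_⟩
  rw [(CFC.sqrt_nonneg M).posSemidef.1, hsq]

theorem IsHermitian.exists_generalized_eigenbasis {A M : Matrix ι ι 𝕜} (hA : A.IsHermitian)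
    (hM : M.PosDef) :
    ∃ (S : Matrix ι ι 𝕜) (lam : ι → ℝ),
      IsUnit S ∧ A * S = M * S * diagonal (RCLike.ofReal ∘ lam) ∧ Sᴴ * M * S = 1 := by
  obtain ⟨R, hR, rfl⟩ := hM.exists_isUnit_conjTranspose_mul_self
  have hRdet : IsUnit R.det := (isUnit_iff_isUnit_det R).1 hR
  have hRHdet : IsUnit Rᴴ.det := (isUnit_iff_isUnit_det _).1 hR.star
  set B := R⁻¹ᴴ * A * R⁻¹
  have hB : B.IsHermitian := isHermitian_conjTranspose_mul_mul R⁻¹ hA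
  set U := (hB.eigenvectorUnitary : Matrix ι ι 𝕜)
  refine ⟨R⁻¹ * U, hB.eigenvalues, ?_, ?_, ?_⟩
  · exact (isUnit_nonsing_inv_iff.2 hR).mul (Unitary.isUnit_coe ..)
  · calc A * (R⁻¹ * U) = Rᴴ * (B * U) := by
          simp only [B, ← mul_assoc, conjTranspose_nonsing_inv, mul_nonsing_inv _ hRHdet, one_mul]
      _ = Rᴴ * R * (R⁻¹ * U) * diagonal (RCLike.ofReal ∘ hB.eigenvalues) := by
          rw [hB.mul_eigenvectorUnitary, mul_assoc Rᴴ, mul_nonsing_inv_cancel_left _ _ hRdet,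
            mul_assoc]
  · simp only [conjTranspose_mul, conjTranspose_nonsing_inv, mul_assoc,
      mul_nonsing_inv_cancel_left _ _ hRdet]
    simp only [← mul_assoc, nonsing_inv_mul _ hRHdet, one_mul]
    exact Unitary.star_mul_self_of_mem hB.eigenvectorUnitary.2

end Matrix

/-- Solvability of the generalized eigenvalue problem with `M`-orthonormal eigenvectors. -/
theorem generalized_eigenproblem_solvable (n : ℕ) (A M : Matrix (Fin n) (Fin n) ℝ)
    (hA : A.IsSymm) (hM : M.PosDef) :
    ∃ (S : Matrix (Fin n) (Fin n) ℝ) (lam : Fin n → ℝ),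
      IsUnit S ∧ A * S = M * S * Matrix.diagonal lam ∧ Sᵀ * M * S = 1 := by
  obtain ⟨S, lam, hS, hAS, hSMS⟩ :=
    (isHermitian_iff_isSymm.2 hA).exists_generalized_eigenbasis hM
  exact ⟨S, lam, hS, by simpa using hAS, by simpa using hSMS⟩
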